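/- arXiv:0907.1387 — 4 statements merged into one kernel-verified Lean document; each statement's English description precedes it below -/
import Mathlib

section
/- For t ∈ ℂ, let P_t = Z₀⁵ + Z₁⁵ + Z₂⁵ + Z₃⁵ + Z₄⁵ − 5t·Z₀Z₁Z₂Z₃Z₄ ∈ ℂ[Z₀,…,Z₄]. Then there exists a nonzero point z ∈ ℂ⁵ at which all five partial derivatives ∂P_t/∂Z_i vanish if and only if t⁵ = 1. Moreover, any such z automatically satisfies P_t(z) = 0, i.e. it is a singular point of the projective quintic hypersurface defined by P_t. -/
open MvPolynomial

/-- The defining polynomial of the one-parameter family of quintic threefolds: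
`P_t = Z₀⁵ + Z₁⁵ + Z₂⁵ + Z₃⁵ + Z₄⁵ − 5t·Z₀Z₁Z₂Z₃Z₄`. -/
noncomputable def quinticFamily (t : ℂ) : MvPolynomial (Fin 5) ℂ :=
  (∑ i : Fin 5, X i ^ 5) - C (5 * t) * ∏ i : Fin 5, X i

lemma quintic_eval (t : ℂ) (z : Fin 5 → ℂ) :
    eval z (quinticFamily t)
      = z 0^5 + z 1^5 + z 2^5 + z 3^5 + z 4^5 - 5*t*(z 0*z 1*z 2*z 3*z 4) := by
  simp [quinticFamily, Fin.sum_univ_five, Fin.prod_univ_five]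

lemma quintic_pderiv0 (t : ℂ) (z : Fin 5 → ℂ) :
    eval z (pderiv 0 (quinticFamily t)) = 5 * z 0 ^ 4 - 5 * t * (z 1 * z 2 * z 3 * z 4) := by
  simp [quinticFamily, Fin.sum_univ_five, Fin.prod_univ_five, pderiv_mul, pderiv_pow, pderiv_X,
    Pi.single_apply]
  try ring_nf
  try tauto

lemma quintic_pderiv1 (t : ℂ) (z : Fin 5 → ℂ) :
    eval z (pderiv 1 (quinticFamily t)) = 5 * z 1 ^ 4 - 5 * t * (z 0 * z 2 * z 3 * z 4) := by
  simp [quinticFamily, Fin.sum_univ_five, Fin.prod_univ_five, pderiv_mul, pderiv_pow, pderiv_X,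
    Pi.single_apply]
  try ring_nf
  try tauto

lemma quintic_pderiv2 (t : ℂ) (z : Fin 5 → ℂ) :
    eval z (pderiv 2 (quinticFamily t)) = 5 * z 2 ^ 4 - 5 * t * (z 0 * z 1 * z 3 * z 4) := by
  simp [quinticFamily, Fin.sum_univ_five, Fin.prod_univ_five, pderiv_mul, pderiv_pow, pderiv_X,
    Pi.single_apply]
  try ring_nf
  try tauto

lemma quintic_pderiv3 (t : ℂ) (z : Fin 5 → ℂ) :
    eval z (pderiv 3 (quinticFamily t)) = 5 * z 3 ^ 4 - 5 * t * (z 0 * z 1 * z 2 * z 4) := by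
  simp [quinticFamily, Fin.sum_univ_five, Fin.prod_univ_five, pderiv_mul, pderiv_pow, pderiv_X,
    Pi.single_apply]
  try ring_nf
  try tauto

lemma quintic_pderiv4 (t : ℂ) (z : Fin 5 → ℂ) :
    eval z (pderiv 4 (quinticFamily t)) = 5 * z 4 ^ 4 - 5 * t * (z 0 * z 1 * z 2 * z 3) := by
  simp [quinticFamily, Fin.sum_univ_five, Fin.prod_univ_five, pderiv_mul, pderiv_pow, pderiv_X,
    Pi.single_apply]
  try ring_nf
  try tauto

/-- From the vanishing of the partial derivatives, each `z i ^ 5 = t * ∏ z j`. -/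
lemma quintic_fifth (t : ℂ) (z : Fin 5 → ℂ)
    (h : ∀ i : Fin 5, eval z (pderiv i (quinticFamily t)) = 0) :
    (z 0 ^ 5 = t * (z 0 * z 1 * z 2 * z 3 * z 4)) ∧
    (z 1 ^ 5 = t * (z 0 * z 1 * z 2 * z 3 * z 4)) ∧
    (z 2 ^ 5 = t * (z 0 * z 1 * z 2 * z 3 * z 4)) ∧
    (z 3 ^ 5 = t * (z 0 * z 1 * z 2 * z 3 * z 4)) ∧
    (z 4 ^ 5 = t * (z 0 * z 1 * z 2 * z 3 * z 4)) := by
  have h0 := h 0; rw [quintic_pderiv0, sub_eq_zero] at h0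
  have h1 := h 1; rw [quintic_pderiv1, sub_eq_zero] at h1
  have h2 := h 2; rw [quintic_pderiv2, sub_eq_zero] at h2
  have h3 := h 3; rw [quintic_pderiv3, sub_eq_zero] at h3
  have h4 := h 4; rw [quintic_pderiv4, sub_eq_zero] at h4
  exact ⟨by linear_combination (z 0 / 5) * h0, by linear_combination (z 1 / 5) * h1,
    by linear_combination (z 2 / 5) * h2, by linear_combination (z 3 / 5) * h3,
    by linear_combination (z 4 / 5) * h4⟩

/-- There is a nonzero common zero of all five partial derivatives of `P_t`
iff `t⁵ = 1`; moreover any nonzero common zero of the partial derivatives is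
automatically a zero of `P_t`, i.e. a singular point of the quintic. -/
theorem quintic_singular_iff_fifth_root_of_unity (t : ℂ) :
    ((∃ z : Fin 5 → ℂ, z ≠ 0 ∧ ∀ i : Fin 5, eval z (pderiv i (quinticFamily t)) = 0)
        ↔ t ^ 5 = 1) ∧
    (∀ z : Fin 5 → ℂ, z ≠ 0 → (∀ i : Fin 5, eval z (pderiv i (quinticFamily t)) = 0) →
        eval z (quinticFamily t) = 0) := by
  constructor
  · constructor
    · rintro ⟨z, hz, h⟩
      obtain ⟨h0, h1, h2, h3, h4⟩ := quintic_fifth t z h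
      set p := z 0 * z 1 * z 2 * z 3 * z 4 with hp
      by_cases hp0 : p = 0
      · exfalso
        apply hz
        funext i
        fin_cases i
        · have : z 0 ^ 5 = 0 := by rw [h0, hp0, mul_zero]
          exact pow_eq_zero_iff (by norm_num) |>.mp this
        · have : z 1 ^ 5 = 0 := by rw [h1, hp0, mul_zero]
          exact pow_eq_zero_iff (by norm_num) |>.mp this
        · have : z 2 ^ 5 = 0 := by rw [h2, hp0, mul_zero]
          exact pow_eq_zero_iff (by norm_num) |>.mp this
        · have : z 3 ^ 5 = 0 := by rw [h3, hp0, mul_zero]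
          exact pow_eq_zero_iff (by norm_num) |>.mp this
        · have : z 4 ^ 5 = 0 := by rw [h4, hp0, mul_zero]
          exact pow_eq_zero_iff (by norm_num) |>.mp this
      · have hpe : p ^ 5 = t ^ 5 * p ^ 5 := by
          calc p ^ 5 = (z 0 ^ 5) * (z 1 ^ 5) * (z 2 ^ 5) * (z 3 ^ 5) * (z 4 ^ 5) := by ring
          _ = (t * p) * (t * p) * (t * p) * (t * p) * (t * p) := by rw [h0, h1, h2, h3, h4]
          _ = t ^ 5 * p ^ 5 := by ring
        have : (t ^ 5 - 1) * p ^ 5 = 0 := by linear_combination -hpe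
        rcases mul_eq_zero.mp this with h | h
        · exact sub_eq_zero.mp h
        · exact absurd (pow_eq_zero_iff (by norm_num) |>.mp h) hp0
    · intro ht
      refine ⟨![t, t, t, t, 1], ?_, ?_⟩
      · intro hz
        have := congrFun hz 4
        simp at this
      · have e0 : eval ![t, t, t, t, 1] (pderiv 0 (quinticFamily t)) = 0 := by
          rw [quintic_pderiv0]; simp; ring
        have e1 : eval ![t, t, t, t, 1] (pderiv 1 (quinticFamily t)) = 0 := by
          rw [quintic_pderiv1]; simp; ring
        have e2 : eval ![t, t, t, t, 1] (pderiv 2 (quinticFamily t)) = 0 := by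
          rw [quintic_pderiv2]; simp; ring
        have e3 : eval ![t, t, t, t, 1] (pderiv 3 (quinticFamily t)) = 0 := by
          rw [quintic_pderiv3]; simp; ring
        have e4 : eval ![t, t, t, t, 1] (pderiv 4 (quinticFamily t)) = 0 := by
          rw [quintic_pderiv4]; simp; linear_combination -5 * ht
        intro i
        fin_cases i
        exacts [e0, e1, e2, e3, e4]
  · intro z hz h
    obtain ⟨h0, h1, h2, h3, h4⟩ := quintic_fifth t z h
    rw [quintic_eval, h0, h1, h2, h3, h4]
    ring
end

section
/- For every a > 0 and all x, y ∈ ℝ, the series ∑_{j=0}^∞ g_a^{(j)}(x) · g_a^{(j)}(y) / ((2j+1) · (2a)^j · j!) converges absolutely; in particular the function Σ_a(x,y) defined by this series, and hence the paper's local Green kernel G⁰_a(x,y) = √(a/π) · exp(−a(x²+y²)/2) · Σ_a(x,y)/a, are well-defined. -/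
open MeasureTheory Real Set
open scoped FourierTransform Nat

lemma gauss_contDiff (a : ℝ) : ContDiff ℝ ⊤ (fun s : ℝ => Real.exp (-a * s ^ 2)) :=
  Real.contDiff_exp.comp (contDiff_const.mul (contDiff_id.pow 2))

lemma iteratedDeriv_clm (L : ℝ →L[ℝ] ℂ) {g : ℝ → ℝ} (hg : ContDiff ℝ ⊤ g) (n : ℕ) (x : ℝ) :
    iteratedDeriv n (fun t => L (g t)) x = L (iteratedDeriv n g x) := by
  have h : (fun t => L (g t)) = (L : ℝ → ℂ) ∘ g := rfl
  rw [h, iteratedDeriv_eq_iteratedFDeriv, iteratedDeriv_eq_iteratedFDeriv,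
    L.iteratedFDeriv_comp_left hg.contDiffAt le_top]
  rfl

lemma gaussian_iteratedDeriv_bound {a : ℝ} (ha : 0 < a) (j : ℕ) (x : ℝ) :
    |iteratedDeriv j (fun s : ℝ => Real.exp (-a * s ^ 2)) x| ≤
      (π / a) ^ ((1:ℝ)/2) * (2 * π) ^ j *
        ((π ^ 2 / a) ^ (-((j:ℝ) + 1) / 2) * Real.Gamma (((j:ℝ) + 1) / 2)) := by
  have hπ := Real.pi_pos
  set c : ℝ := π ^ 2 / a with hc_def
  have hc : 0 < c := by positivity
  set f : ℝ → ℂ := fun t => ((Real.exp (-c * t ^ 2) : ℝ) : ℂ) with hf_def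
  have hba : (0:ℝ) < π / a := div_pos hπ ha
  have hb : 0 < (((π / a : ℝ)) : ℂ).re := by simpa using hba
  -- Fourier transform of f
  have hFT : 𝓕 f = fun t : ℝ =>
      (1 / (((π / a : ℝ)) : ℂ) ^ (1/2 : ℂ)) * Complex.exp (-(a:ℂ) * (t:ℂ) ^ 2) := by
    have h0 := fourier_gaussian_pi hb
    have heq : (fun t : ℝ => Complex.exp (-(π:ℂ) * (((π / a : ℝ)) : ℂ) * (t:ℂ) ^ 2)) = f := by
      funext t
      show _ = ((Real.exp (-c * t ^ 2) : ℝ) : ℂ)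
      rw [Complex.ofReal_exp]
      congr 1
      rw [hc_def]
      push_cast
      field_simp
    rw [heq] at h0
    rw [h0]
    funext t
    congr 2
    have hπ0 : ((π:ℝ):ℂ) ≠ 0 := Complex.ofReal_ne_zero.mpr (ne_of_gt hπ)
    have ha0 : ((a:ℝ):ℂ) ≠ 0 := Complex.ofReal_ne_zero.mpr (ne_of_gt ha)
    push_cast
    field_simp
  -- integrability of moments
  have hint : ∀ n : ℕ, (n : ℕ∞) ≤ (j : ℕ∞) → Integrable (fun t : ℝ => t ^ n • f t) := by
    intro n _
    have h1 : (-1:ℝ) < (n:ℝ) := by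
      have : (0:ℝ) ≤ (n:ℝ) := Nat.cast_nonneg n
      linarith
    have hint0 : Integrable (fun t : ℝ => t ^ n * Real.exp (-c * t ^ 2)) := by
      simpa [Real.rpow_natCast] using integrable_rpow_mul_exp_neg_mul_sq hc h1
    have := hint0.ofReal (𝕜 := ℂ)
    apply this.congr
    filter_upwards with t
    show ((t ^ n * rexp (-c * t ^ 2) : ℝ) : ℂ) = t ^ n • ((rexp (-c * t ^ 2) : ℝ) : ℂ)
    rw [Complex.real_smul]
    push_cast
    ring
  have hD := Real.iteratedDeriv_fourier (f := f) (N := (j : ℕ∞)) hint le_rfl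
  set C : ℂ := 1 / (((π / a : ℝ)) : ℂ) ^ (1/2 : ℂ) with hC_def
  set L : ℝ →L[ℝ] ℂ := C • Complex.ofRealCLM with hL_def
  have hFT' : 𝓕 f = fun t : ℝ => L (Real.exp (-a * t ^ 2)) := by
    rw [hFT]; funext t
    simp only [hL_def, ContinuousLinearMap.smul_apply, Complex.ofRealCLM_apply, smul_eq_mul]
    rw [Complex.ofReal_exp]
    congr 2
    push_cast
    ring
  have hEq : L (iteratedDeriv j (fun s : ℝ => Real.exp (-a * s ^ 2)) x) =
      𝓕 (fun t : ℝ => (-2 * (π:ℂ) * Complex.I * (t:ℂ)) ^ j • f t) x := by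
    rw [← iteratedDeriv_clm L (gauss_contDiff a) j x, ← congrFun hD x]
    congr 1
    rw [hFT']
  -- norm of C
  have hznorm : ‖(((π / a : ℝ)) : ℂ) ^ (1/2 : ℂ)‖ = (π / a) ^ ((1:ℝ)/2) := by
    rw [Complex.norm_cpow_eq_rpow_re_of_pos hba]
    norm_num
  have hCnorm : ‖C‖ = ((π / a) ^ ((1:ℝ)/2))⁻¹ := by
    rw [hC_def, norm_div, norm_one, hznorm, one_div]
  have hCpos : (0:ℝ) < (π / a) ^ ((1:ℝ)/2) := Real.rpow_pos_of_pos hba _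
  -- norm of LHS
  have hLnorm : ‖L (iteratedDeriv j (fun s : ℝ => Real.exp (-a * s ^ 2)) x)‖ =
      ((π / a) ^ ((1:ℝ)/2))⁻¹ * |iteratedDeriv j (fun s : ℝ => Real.exp (-a * s ^ 2)) x| := by
    simp only [hL_def, ContinuousLinearMap.smul_apply, Complex.ofRealCLM_apply, smul_eq_mul,
      norm_mul, hCnorm, Complex.norm_real, Real.norm_eq_abs]
  -- bound on RHS via L¹ bound
  have hmoment : ∫ t : ℝ, |t| ^ j * Real.exp (-c * t ^ 2) =
      c ^ (-((j:ℝ) + 1) / 2) * (1/2) * Real.Gamma (((j:ℝ) + 1) / 2) * 2 := by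
    have h1' : (-1:ℝ) < (j:ℝ) := by
      have : (0:ℝ) ≤ (j:ℝ) := Nat.cast_nonneg j
      linarith
    have h2 := integral_rpow_mul_exp_neg_mul_rpow (p := (2:ℝ)) (q := (j:ℝ)) two_pos h1' hc
    have h3 : ∫ t in Ioi (0:ℝ), t ^ j * Real.exp (-c * t ^ 2) =
        c ^ (-((j:ℝ) + 1) / 2) * (1/2) * Real.Gamma (((j:ℝ) + 1) / 2) := by
      rw [← h2]
      refine setIntegral_congr_fun measurableSet_Ioi (fun t ht => ?_)
      rw [Real.rpow_natCast, Real.rpow_two]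
    have h4 : (fun t : ℝ => |t| ^ j * Real.exp (-c * t ^ 2)) =
        (fun t : ℝ => (fun u : ℝ => u ^ j * Real.exp (-c * u ^ 2)) |t|) := by
      funext t
      simp [sq_abs]
    rw [h4, integral_comp_abs (f := fun u : ℝ => u ^ j * Real.exp (-c * u ^ 2)), h3]
    ring
  have hRHS : ‖𝓕 (fun t : ℝ => (-2 * (π:ℂ) * Complex.I * (t:ℂ)) ^ j • f t) x‖ ≤
      (2 * π) ^ j * (c ^ (-((j:ℝ) + 1) / 2) * Real.Gamma (((j:ℝ) + 1) / 2)) := by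
    refine (VectorFourier.norm_fourierIntegral_le_integral_norm _ _ _ _ _).trans_eq ?_
    have hnorm : ∀ t : ℝ, ‖(-2 * (π:ℂ) * Complex.I * (t:ℂ)) ^ j • f t‖ =
        (2 * π) ^ j * (|t| ^ j * Real.exp (-c * t ^ 2)) := by
      intro t
      have h5 : (-2 * (π:ℂ) * Complex.I * (t:ℂ)) = ((-2 * π * t : ℝ) : ℂ) * Complex.I := by
        push_cast; ring
      rw [norm_smul, norm_pow, h5, norm_mul, Complex.norm_real, Complex.norm_I, mul_one,
        Real.norm_eq_abs, abs_mul, abs_mul]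
      have : ‖f t‖ = Real.exp (-c * t ^ 2) := by
        show ‖((Real.exp (-c * t ^ 2) : ℝ) : ℂ)‖ = _
        rw [Complex.norm_real, Real.norm_eq_abs, abs_of_pos (Real.exp_pos _)]
      rw [this]
      rw [abs_of_nonpos (by norm_num : (-2:ℝ) ≤ 0), abs_of_pos hπ]
      rw [mul_pow, mul_pow]
      ring
    rw [show (∫ t : ℝ, ‖(-2 * (π:ℂ) * Complex.I * (t:ℂ)) ^ j • f t‖) =
        ∫ t : ℝ, (2 * π) ^ j * (|t| ^ j * Real.exp (-c * t ^ 2)) from integral_congr_ae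
          (Filter.Eventually.of_forall hnorm), integral_const_mul, hmoment]
    ring
  -- combine
  have hiter : ((π / a) ^ ((1:ℝ)/2))⁻¹ * |iteratedDeriv j (fun s : ℝ => Real.exp (-a * s ^ 2)) x| ≤
      (2 * π) ^ j * (c ^ (-((j:ℝ) + 1) / 2) * Real.Gamma (((j:ℝ) + 1) / 2)) := by
    rw [← hLnorm, hEq]
    exact hRHS
  calc |iteratedDeriv j (fun s : ℝ => Real.exp (-a * s ^ 2)) x|
      = (π / a) ^ ((1:ℝ)/2) * (((π / a) ^ ((1:ℝ)/2))⁻¹ *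
          |iteratedDeriv j (fun s : ℝ => Real.exp (-a * s ^ 2)) x|) := by
        field_simp
    _ ≤ (π / a) ^ ((1:ℝ)/2) * ((2 * π) ^ j * (c ^ (-((j:ℝ) + 1) / 2) *
          Real.Gamma (((j:ℝ) + 1) / 2))) := by
        exact mul_le_mul_of_nonneg_left hiter hCpos.le
    _ = (π / a) ^ ((1:ℝ)/2) * (2 * π) ^ j *
          ((π ^ 2 / a) ^ (-((j:ℝ) + 1) / 2) * Real.Gamma (((j:ℝ) + 1) / 2)) := by
        rw [hc_def]; ring
lemma gamma_ratio_bound {j : ℕ} (hj : 1 ≤ j) :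
    Real.Gamma (((j:ℝ) + 1) / 2) ≤
      Real.sqrt (2 / (j:ℝ)) * Real.Gamma (((j:ℝ) + 2) / 2) := by
  have hj0 : (0:ℝ) < (j:ℝ) := by exact_mod_cast hj
  set s : ℝ := (j:ℝ) / 2 with hs_def
  have hs : 0 < s := by positivity
  have hs1 : 0 < s + 1 := by linarith
  have hGmid : 0 < Real.Gamma (((j:ℝ) + 1) / 2) := Real.Gamma_pos_of_pos (by positivity)
  have hGs : 0 < Real.Gamma s := Real.Gamma_pos_of_pos hs
  have hGs1 : 0 < Real.Gamma (s + 1) := Real.Gamma_pos_of_pos hs1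
  have hconv := Real.convexOn_log_Gamma.2 (Set.mem_Ioi.mpr hs) (Set.mem_Ioi.mpr hs1)
      (by norm_num : (0:ℝ) ≤ 1/2) (by norm_num : (0:ℝ) ≤ 1/2) (by norm_num)
  have h2 : Real.log (Real.Gamma (((j:ℝ) + 1) / 2)) ≤
      1/2 * Real.log (Real.Gamma s) + 1/2 * Real.log (Real.Gamma (s + 1)) := by
    have hmid : (2⁻¹ : ℝ) * s + 2⁻¹ * (s + 1) = ((j:ℝ) + 1) / 2 := by
      rw [hs_def]; ring
    simpa [Function.comp, smul_eq_mul, hmid] using hconv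
  have h1 : Real.Gamma (((j:ℝ) + 1) / 2) ^ 2 ≤ Real.Gamma s * Real.Gamma (s + 1) := by
    have h3 : Real.Gamma (((j:ℝ) + 1) / 2) ^ 2 =
        Real.exp (Real.log (Real.Gamma (((j:ℝ) + 1) / 2)) +
          Real.log (Real.Gamma (((j:ℝ) + 1) / 2))) := by
      rw [Real.exp_add, Real.exp_log hGmid]; ring
    have h4 : Real.Gamma s * Real.Gamma (s + 1) =
        Real.exp (Real.log (Real.Gamma s) + Real.log (Real.Gamma (s + 1))) := by
      rw [Real.exp_add, Real.exp_log hGs, Real.exp_log hGs1]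
    rw [h3, h4]
    apply Real.exp_le_exp.mpr
    linarith
  have hGadd : Real.Gamma (s + 1) = s * Real.Gamma s := Real.Gamma_add_one hs.ne'
  have h5 : Real.Gamma (((j:ℝ) + 1) / 2) ^ 2 ≤
      (Real.sqrt (2 / (j:ℝ)) * Real.Gamma (((j:ℝ) + 2) / 2)) ^ 2 := by
    have hsq : Real.sqrt (2 / (j:ℝ)) ^ 2 = 2 / (j:ℝ) := Real.sq_sqrt (by positivity)
    have hG2 : Real.Gamma (((j:ℝ) + 2) / 2) = Real.Gamma (s + 1) := by
      congr 1; rw [hs_def]; ring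
    rw [mul_pow, hsq, hG2]
    have : Real.Gamma s * Real.Gamma (s + 1) = 2 / (j:ℝ) * Real.Gamma (s + 1) ^ 2 := by
      rw [hGadd, hs_def]
      field_simp
    linarith [h1, this]
  calc Real.Gamma (((j:ℝ) + 1) / 2)
      = Real.sqrt (Real.Gamma (((j:ℝ) + 1) / 2) ^ 2) := (Real.sqrt_sq hGmid.le).symm
    _ ≤ Real.sqrt ((Real.sqrt (2 / (j:ℝ)) * Real.Gamma (((j:ℝ) + 2) / 2)) ^ 2) :=
        Real.sqrt_le_sqrt h5
    _ = Real.sqrt (2 / (j:ℝ)) * Real.Gamma (((j:ℝ) + 2) / 2) := by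
        apply Real.sqrt_sq
        have : 0 < Real.Gamma (((j:ℝ) + 2) / 2) := Real.Gamma_pos_of_pos (by positivity)
        positivity

lemma gamma_duplication (j : ℕ) :
    Real.Gamma (((j:ℝ) + 1) / 2) * Real.Gamma (((j:ℝ) + 2) / 2) =
      (Nat.factorial j : ℝ) / 2 ^ j * Real.sqrt π := by
  have h := Real.Gamma_mul_Gamma_add_half (((j:ℝ) + 1) / 2)
  rw [show ((j:ℝ) + 1) / 2 + 1/2 = ((j:ℝ) + 2) / 2 by ring,
    show 2 * (((j:ℝ) + 1) / 2) = ((j:ℝ) + 1) by ring,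
    Real.Gamma_nat_eq_factorial] at h
  rw [show (1:ℝ) - ((j:ℝ) + 1) = -(j:ℝ) by ring] at h
  rw [h, Real.rpow_neg (by norm_num : (0:ℝ) ≤ 2), Real.rpow_natCast]
  ring

lemma u_bound {j : ℕ} (hj : 1 ≤ j) :
    (2:ℝ) ^ j * Real.Gamma (((j:ℝ) + 1) / 2) ^ 2 /
        (π * ((2 * (j:ℝ) + 1) * (Nat.factorial j : ℝ))) ≤
      Real.sqrt 2 / Real.sqrt π * ((j:ℝ) * Real.sqrt (j:ℝ))⁻¹ := by
  have hπ := Real.pi_pos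
  have hj0 : (0:ℝ) < (j:ℝ) := by exact_mod_cast hj
  set G1 := Real.Gamma (((j:ℝ) + 1) / 2) with hG1
  set G2 := Real.Gamma (((j:ℝ) + 2) / 2) with hG2
  have hG1p : 0 < G1 := Real.Gamma_pos_of_pos (by positivity)
  have hG2p : 0 < G2 := Real.Gamma_pos_of_pos (by positivity)
  have hsπ : 0 < Real.sqrt π := Real.sqrt_pos.mpr hπ
  have hsj : 0 < Real.sqrt (j:ℝ) := Real.sqrt_pos.mpr hj0
  have hfac : (Nat.factorial j : ℝ) = 2 ^ j * G1 * G2 / Real.sqrt π := by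
    rw [eq_div_iff hsπ.ne']
    have h := gamma_duplication j
    rw [← hG1, ← hG2] at h
    field_simp at h
    linear_combination -h
  have heq : (2:ℝ) ^ j * G1 ^ 2 / (π * ((2 * (j:ℝ) + 1) * (Nat.factorial j : ℝ))) =
      Real.sqrt π * G1 / (π * (2 * (j:ℝ) + 1) * G2) := by
    rw [hfac]
    rw [div_eq_div_iff (by positivity) (by positivity)]
    field_simp
  rw [heq]
  have hstep : Real.sqrt π * G1 / (π * (2 * (j:ℝ) + 1) * G2) ≤
      Real.sqrt π * (Real.sqrt (2 / (j:ℝ)) * G2) / (π * (2 * (j:ℝ) + 1) * G2) := by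
    gcongr
    exact gamma_ratio_bound hj
  refine hstep.trans ?_
  have heq2 : Real.sqrt π * (Real.sqrt (2 / (j:ℝ)) * G2) / (π * (2 * (j:ℝ) + 1) * G2) =
      Real.sqrt 2 / (Real.sqrt π * ((2 * (j:ℝ) + 1) * Real.sqrt (j:ℝ))) := by
    rw [Real.sqrt_div (by norm_num : (0:ℝ) ≤ 2)]
    rw [div_eq_div_iff (by positivity) (by positivity)]
    field_simp
    linear_combination Real.mul_self_sqrt hπ.le
  rw [heq2]
  have hle : Real.sqrt 2 / (Real.sqrt π * ((2 * (j:ℝ) + 1) * Real.sqrt (j:ℝ))) ≤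
      Real.sqrt 2 / (Real.sqrt π * ((j:ℝ) * Real.sqrt (j:ℝ))) := by
    apply div_le_div_of_nonneg_left (Real.sqrt_nonneg 2) (by positivity)
    have h1 : (j:ℝ) * Real.sqrt (j:ℝ) ≤ (2 * (j:ℝ) + 1) * Real.sqrt (j:ℝ) :=
      mul_le_mul_of_nonneg_right (by linarith) hsj.le
    exact mul_le_mul_of_nonneg_left h1 hsπ.le
  refine hle.trans (le_of_eq ?_)
  field_simp

lemma summable_w : Summable (fun j : ℕ => (((j:ℝ) + 1) * Real.sqrt ((j:ℝ) + 1))⁻¹) := by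
  have h32 : Summable (fun n : ℕ => ((n:ℝ) ^ ((3:ℝ)/2))⁻¹) :=
    Real.summable_nat_rpow_inv.mpr (by norm_num)
  have h := (summable_nat_add_iff 1).mpr h32
  apply h.congr
  intro n
  have hx : (0:ℝ) < (n:ℝ) + 1 := by positivity
  rw [show ((n + 1 : ℕ) : ℝ) = (n:ℝ) + 1 by push_cast; ring]
  rw [show (3:ℝ)/2 = 1 + 1/2 by norm_num, Real.rpow_add hx, Real.rpow_one,
    ← Real.sqrt_eq_rpow]

lemma summable_bound (a : ℝ) (ha : 0 < a) :
    Summable (fun j : ℕ =>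
      ((π / a) ^ ((1:ℝ)/2) * (2 * π) ^ j *
        ((π ^ 2 / a) ^ (-((j:ℝ) + 1) / 2) * Real.Gamma (((j:ℝ) + 1) / 2))) ^ 2 /
      ((2 * (j:ℝ) + 1) * (2 * a) ^ j * (Nat.factorial j : ℝ))) := by
  have hπ := Real.pi_pos
  have hEq : ∀ j : ℕ,
      ((π / a) ^ ((1:ℝ)/2) * (2 * π) ^ j *
        ((π ^ 2 / a) ^ (-((j:ℝ) + 1) / 2) * Real.Gamma (((j:ℝ) + 1) / 2))) ^ 2 /
      ((2 * (j:ℝ) + 1) * (2 * a) ^ j * (Nat.factorial j : ℝ)) =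
      (2:ℝ) ^ j * Real.Gamma (((j:ℝ) + 1) / 2) ^ 2 /
        (π * ((2 * (j:ℝ) + 1) * (Nat.factorial j : ℝ))) := by
    intro j
    have eA : ((π / a) ^ ((1:ℝ)/2)) ^ 2 = π / a := by
      rw [← Real.rpow_natCast ((π / a) ^ ((1:ℝ)/2)) 2,
        ← Real.rpow_mul (le_of_lt (div_pos hπ ha))]
      norm_num
    have hpa : (0:ℝ) < π ^ 2 / a := by positivity
    have eC : ((π ^ 2 / a) ^ (-((j:ℝ) + 1) / 2)) ^ 2 = ((π ^ 2 / a) ^ (j + 1))⁻¹ := by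
      rw [← Real.rpow_natCast ((π ^ 2 / a) ^ (-((j:ℝ) + 1) / 2)) 2, ← Real.rpow_mul hpa.le]
      rw [show -((j:ℝ) + 1) / 2 * ((2:ℕ):ℝ) = -((j:ℝ) + 1) by push_cast; ring]
      rw [Real.rpow_neg hpa.le]
      rw [show ((j:ℝ) + 1) = ((j + 1 : ℕ) : ℝ) by push_cast; ring, Real.rpow_natCast]
    simp only [mul_pow]
    rw [eA, eC]
    have h2j1 : (0:ℝ) < 2 * (j:ℝ) + 1 := by positivity
    have hfct : (0:ℝ) < (Nat.factorial j : ℝ) := by exact_mod_cast j.factorial_pos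
    have hG : 0 < Real.Gamma (((j:ℝ) + 1) / 2) := Real.Gamma_pos_of_pos (by positivity)
    field_simp
    rw [div_pow, pow_succ a j]
    field_simp
    ring
  rw [summable_congr hEq, ← summable_nat_add_iff 1]
  apply Summable.of_nonneg_of_le (f := fun j : ℕ =>
    Real.sqrt 2 / Real.sqrt π * (((j:ℝ) + 1) * Real.sqrt ((j:ℝ) + 1))⁻¹) ?_ ?_
    (summable_w.mul_left (Real.sqrt 2 / Real.sqrt π))
  · intro j
    have hG : 0 < Real.Gamma ((((j+1 : ℕ)):ℝ) + 1) / 2 := by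
      have : 0 < Real.Gamma (((j+1 : ℕ):ℝ) + 1) := Real.Gamma_pos_of_pos (by positivity)
      positivity
    positivity
  · intro j
    have h := u_bound (j := j + 1) (Nat.le_add_left 1 j)
    push_cast at h ⊢
    exact h

/-- Absolute convergence of the local Green kernel series: for `a > 0` and `x, y ∈ ℝ`,
the series `∑_j g_a^{(j)}(x) g_a^{(j)}(y) / ((2j+1)(2a)^j j!)` converges absolutely,
where `g_a(x) = exp(−a x²)`; hence `Σ_a(x,y)` and the local Green kernel
`G⁰_a(x,y) = √(a/π) exp(−a(x²+y²)/2) Σ_a(x,y)/a` are well-defined. -/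
theorem greenKernelSeries_summable (a : ℝ) (ha : 0 < a) (x y : ℝ) :
    Summable (fun j : ℕ =>
      |iteratedDeriv j (fun s : ℝ => Real.exp (-a * s ^ 2)) x *
          iteratedDeriv j (fun s : ℝ => Real.exp (-a * s ^ 2)) y /
        ((2 * j + 1) * (2 * a) ^ j * Nat.factorial j)|) := by
  apply Summable.of_nonneg_of_le (fun j => abs_nonneg _) ?_ (summable_bound a ha)
  intro j
  have hD : (0:ℝ) < (2 * (j:ℝ) + 1) * (2 * a) ^ j * (Nat.factorial j : ℝ) := by
    have hfct : (0:ℝ) < (Nat.factorial j : ℝ) := by exact_mod_cast j.factorial_pos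
    positivity
  rw [abs_div, abs_mul, abs_of_pos hD, pow_two]
  gcongr
  · exact gaussian_iteratedDeriv_bound ha j x
  · exact gaussian_iteratedDeriv_bound ha j y
end

section
/- For every a > 0, the local Green kernel on the diagonal at the origin satisfies G⁰_a(0,0) = (1/√(πa)) · ∑_{m=0}^∞ C(2m,m) / (4^m · (4m+1)), where C(2m,m) is the central binomial coefficient and the series on the right converges. -/
open Real

/-- The paper's local Green kernel for the harmonic-oscillator model of the Kodaira
Laplacian: `G⁰_a(x,y) = √(a/π) e^{−a(x²+y²)/2}
∑_j g_a^{(j)}(x) g_a^{(j)}(y)/((2j+1) a^{j+1} 2^j j!)`, `g_a(s) = exp(−a s²)`. -/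
noncomputable def localGreenKernel (a x y : ℝ) : ℝ :=
  Real.sqrt (a / π) * Real.exp (-a * (x ^ 2 + y ^ 2) / 2) *
    ∑' j : ℕ,
      iteratedDeriv j (fun s : ℝ => Real.exp (-a * s ^ 2)) x *
          iteratedDeriv j (fun s : ℝ => Real.exp (-a * s ^ 2)) y /
        ((2 * j + 1) * a ^ (j + 1) * 2 ^ j * Nat.factorial j)

section Aux
open Real Nat Polynomial

lemma df_fact : ∀ m : ℕ, (2*m-1)‼ * 2^m * m ! = (2*m)!
  | 0 => rfl
  | (m+1) => by
    have h : 2*(m+1)-1 = 2*m+1 := by omega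
    have h2 : 2*(m+1) = 2*m+1+1 := by omega
    rw [h, Nat.doubleFactorial_add_one, h2, Nat.factorial_succ, Nat.factorial_succ,
      Nat.factorial_succ]
    have ih := df_fact m
    calc (2*m+1) * (2*m-1)‼ * 2^(m+1) * ((m+1) * m !)
        = ((2*m+1+1)*(2*m+1)) * ((2*m-1)‼ * 2^m * m !) := by ring
      _ = (2*m+1+1)*((2*m+1)*(2*m)!) := by rw [ih]; ring

lemma nat_id (m : ℕ) : ((2*m-1)‼)^2 * 4^m = Nat.choose (2*m) m * (2*m)! := by
  have hpos : 0 < m ! * m ! := Nat.mul_pos m.factorial_pos m.factorial_pos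
  apply Nat.eq_of_mul_eq_mul_right hpos
  have hc := Nat.choose_mul_factorial_mul_factorial (Nat.le_mul_of_pos_left m (by norm_num) : m ≤ 2*m)
  have h2 : 2*m - m = m := by omega
  rw [h2] at hc
  have h4 : (4:ℕ)^m = 2^m * 2^m := by rw [← mul_pow]; norm_num
  calc ((2*m-1)‼)^2 * 4^m * (m ! * m !)
      = ((2*m-1)‼ * 2^m * m !) * ((2*m-1)‼ * 2^m * m !) := by rw [h4]; ring
    _ = (2*m)! * (2*m)! := by rw [df_fact]
    _ = Nat.choose (2*m) m * (2*m)! * (m ! * m !) := by rw [← hc]; ring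

lemma binom_bound : ∀ m : ℕ, (2*m+1) * (Nat.centralBinom m)^2 ≤ 16^m
  | 0 => le_refl 1
  | (m+1) => by
    have ih := binom_bound m
    have key := Nat.succ_mul_centralBinom_succ m
    have hp : 0 < (m+1)^2 := by positivity
    refine Nat.le_of_mul_le_mul_left ?_ hp
    calc (m+1)^2 * ((2*(m+1)+1) * (Nat.centralBinom (m+1))^2)
        = (2*m+3) * ((m+1) * Nat.centralBinom (m+1))^2 := by ring
      _ = (2*m+3) * (2*(2*m+1) * Nat.centralBinom m)^2 := by rw [key]
      _ = 4*(2*m+3)*(2*m+1) * ((2*m+1) * (Nat.centralBinom m)^2) := by ring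
      _ ≤ 4*(2*m+3)*(2*m+1) * 16^m := Nat.mul_le_mul_left _ ih
      _ = (4*(2*m+3)*(2*m+1)) * 16^m := by ring
      _ ≤ ((m+1)^2 * 16) * 16^m := Nat.mul_le_mul_right _ (by nlinarith)
      _ = (m+1)^2 * 16^(m+1) := by rw [pow_succ]; ring

lemma gauss_deriv_zero (a : ℝ) (ha : 0 < a) (j : ℕ) :
    iteratedDeriv j (fun s : ℝ => Real.exp (-a * s ^ 2)) 0
      = Real.sqrt (2*a) ^ j * ((-1:ℝ)^j * (((Polynomial.hermite j).coeff 0 : ℤ) : ℝ)) := by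
  set c := Real.sqrt (2*a) with hc
  have hc2 : c^2 = 2*a := Real.sq_sqrt (by linarith)
  have hfun : (fun s : ℝ => Real.exp (-a * s ^ 2))
      = fun s : ℝ => (fun y : ℝ => Real.exp (-(y ^ 2 / 2))) (c * s) := by
    funext s
    congr 1
    rw [mul_pow, hc2]
    ring
  have hcont : ContDiff ℝ j (fun y : ℝ => Real.exp (-(y ^ 2 / 2))) :=
    (Real.contDiff_exp.of_le le_top).comp
      (((contDiff_id.pow 2).div_const 2).neg)
  rw [hfun, iteratedDeriv_comp_const_mul hcont c]
  simp only []
  rw [mul_zero,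
    iteratedDeriv_eq_iterate, Polynomial.deriv_gaussian_eq_hermite_mul_gaussian]
  have haev : Polynomial.aeval (0:ℝ) (Polynomial.hermite j)
      = (((Polynomial.hermite j).coeff 0 : ℤ) : ℝ) := by
    rw [Polynomial.aeval_def, Polynomial.eval₂_at_zero]; rfl
  rw [haev]
  norm_num

lemma hermite_coeff_even (m : ℕ) :
    ((Polynomial.hermite (2*m)).coeff 0 : ℤ) = (-1)^m * (2*m-1)‼ := by
  have := Polynomial.coeff_hermite_explicit m 0
  simpa using this

lemma hermite_coeff_odd (j : ℕ) (hj : Odd j) :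
    ((Polynomial.hermite j).coeff 0 : ℤ) = 0 :=
  Polynomial.coeff_hermite_of_odd_add (by simpa using hj)



lemma summable_part :
    Summable (fun m : ℕ => (Nat.choose (2 * m) m : ℝ) / (4 ^ m * (4 * m + 1))) := by
  have hmaj : Summable (fun m : ℕ => 1 / ((m : ℝ) + 1) ^ ((3:ℝ)/2)) := by
    have h0 := Real.summable_one_div_nat_rpow.mpr (show (1:ℝ) < 3/2 by norm_num)
    have h1 := (summable_nat_add_iff 1).mpr h0
    simpa [Nat.cast_add] using h1
  refine Summable.of_nonneg_of_le (fun m => by positivity) (fun m => ?_) hmaj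
  have hC : (0:ℝ) ≤ (Nat.choose (2 * m) m : ℝ) / (4 ^ m * (4 * m + 1)) := by positivity
  have hR : (0:ℝ) ≤ 1 / ((m : ℝ) + 1) ^ ((3:ℝ)/2) := by positivity
  rw [← Real.sqrt_sq hC, ← Real.sqrt_sq hR]
  apply Real.sqrt_le_sqrt
  have hsq : (1 / ((m : ℝ) + 1) ^ ((3:ℝ)/2)) ^ 2 = 1 / ((m : ℝ) + 1) ^ (3:ℕ) := by
    rw [div_pow, one_pow, ← Real.rpow_natCast (((m:ℝ)+1) ^ ((3:ℝ)/2)) 2,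
      ← Real.rpow_mul (by positivity), ← Real.rpow_natCast ((m:ℝ)+1) 3]
    norm_num
  rw [hsq, div_pow]
  have hnat : (Nat.choose (2*m) m)^2 * (m+1)^3 ≤ 16^m * (4*m+1)^2 := by
    have hb := binom_bound m
    have hcb : Nat.centralBinom m = Nat.choose (2*m) m := rfl
    rw [hcb] at hb
    have h1 : (m+1)^3 ≤ (2*m+1)*(4*m+1)^2 := by nlinarith
    calc (Nat.choose (2*m) m)^2 * (m+1)^3
        ≤ (Nat.choose (2*m) m)^2 * ((2*m+1)*(4*m+1)^2) := Nat.mul_le_mul_left _ h1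
      _ = ((2*m+1) * (Nat.choose (2*m) m)^2) * (4*m+1)^2 := by ring
      _ ≤ 16^m * (4*m+1)^2 := Nat.mul_le_mul_right _ hb
  have hnatR : ((Nat.choose (2*m) m : ℝ))^2 * ((m:ℝ)+1)^3 ≤ 16^m * (4*(m:ℝ)+1)^2 := by
    exact_mod_cast hnat
  rw [div_le_div_iff₀ (by positivity) (by positivity)]
  calc (Nat.choose (2*m) m : ℝ)^2 * (((m:ℝ)+1)^3) ≤ 16^m * (4*(m:ℝ)+1)^2 := hnatR
    _ = 1 * (4 ^ m * (4 * (m:ℝ) + 1)) ^ 2 := by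
        rw [one_mul, mul_pow, ← pow_mul, mul_comm m 2, pow_mul]
        norm_num

/-- Diagonal value of the local Green kernel at the origin:
`G⁰_a(0,0) = (1/√(πa)) ∑_{m=0}^∞ C(2m,m)/(4^m (4m+1))`, the series converging. -/
theorem localGreenKernel_diagonal_value (a : ℝ) (ha : 0 < a) :
    Summable (fun m : ℕ => (Nat.choose (2 * m) m : ℝ) / (4 ^ m * (4 * m + 1))) ∧
    localGreenKernel a 0 0
      = (1 / Real.sqrt (π * a)) *
          ∑' m : ℕ, (Nat.choose (2 * m) m : ℝ) / (4 ^ m * (4 * m + 1)) := by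
  refine ⟨summable_part, ?_⟩
  unfold localGreenKernel
  set F : ℕ → ℝ := fun j =>
      iteratedDeriv j (fun s : ℝ => Real.exp (-a * s ^ 2)) 0 *
          iteratedDeriv j (fun s : ℝ => Real.exp (-a * s ^ 2)) 0 /
        ((2 * j + 1) * a ^ (j + 1) * 2 ^ j * Nat.factorial j) with hF
  have hodd : ∀ j, Odd j → F j = 0 := by
    intro j hj
    rw [hF]
    simp only [gauss_deriv_zero a ha j, hermite_coeff_odd j hj]
    push_cast
    ring
  have hinj : Function.Injective (fun m : ℕ => 2 * m) := by
    intro m n h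
    have : 2 * m = 2 * n := h
    omega
  have hsupp : Function.support F ⊆ Set.range (fun m : ℕ => 2 * m) := by
    intro j hj
    rcases Nat.even_or_odd j with he | ho
    · obtain ⟨k, hk⟩ := he
      exact ⟨k, show 2 * k = j by omega⟩
    · exact absurd (hodd j ho) hj
  have h1 : (∑' j, F j) = ∑' m, F (2 * m) := (Function.Injective.tsum_eq hinj hsupp).symm
  have h2 : ∀ m : ℕ, F (2 * m)
      = a⁻¹ * ((Nat.choose (2 * m) m : ℝ) / (4 ^ m * (4 * m + 1))) := by
    intro m
    rw [hF]
    simp only [gauss_deriv_zero a ha (2*m), hermite_coeff_even m]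
    push_cast
    set D : ℝ := (((2*m-1)‼ : ℕ) : ℝ) with hD
    set C : ℝ := ((Nat.choose (2*m) m : ℕ) : ℝ) with hC
    have hkey : D^2 * 4^m = C * ((2*m)! : ℝ) := by
      rw [hD, hC]
      exact_mod_cast congrArg (Nat.cast : ℕ → ℝ) (nat_id m)
    have e1 : ((2*a)^m)^2 = 4^m * a^(2*m) := by
      rw [← pow_mul, mul_comm m 2, pow_mul, (by ring : (2*a)^2 = 4*a^2), mul_pow, ← pow_mul]
    have e2 : ((-1:ℝ))^(2*m) = 1 := by
      rw [pow_mul]; norm_num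
    have e3 : ((-1:ℝ)^m)^2 = 1 := by
      rw [← pow_mul]; exact Even.neg_one_pow ⟨m, by ring⟩
    have e4 : ((2:ℝ))^(2*m) = 4^m := by
      rw [pow_mul]; norm_num
    have hden : a^(2*m+1) = a^(2*m) * a := by rw [pow_succ]
    have hc2 : Real.sqrt (2*a) ^ (2*m) = (2*a)^m := by
      rw [pow_mul, Real.sq_sqrt (by linarith)]
    rw [hc2, e2, e4, hden]
    have hne1 : ((2*m)! : ℝ) ≠ 0 := Nat.cast_ne_zero.mpr (Nat.factorial_ne_zero _)
    have hne3 : a ≠ 0 := ne_of_gt ha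
    have hnum : (2*a)^m * (1 * ((-1:ℝ)^m * D)) * ((2*a)^m * (1 * ((-1:ℝ)^m * D)))
        = 4^m * a^(2*m) * D^2 := by
      calc (2*a)^m * (1 * ((-1:ℝ)^m * D)) * ((2*a)^m * (1 * ((-1:ℝ)^m * D)))
          = ((2*a)^m)^2 * (((-1:ℝ)^m)^2 * D^2) := by ring
        _ = 4^m * a^(2*m) * D^2 := by rw [e1, e3]; ring
    rw [hnum]
    rw [div_eq_iff (by positivity), mul_comm (a⁻¹) _]
    field_simp
    linear_combination (4*(m:ℝ)+1) * hkey
  rw [h1]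
  have h3 : (∑' m, F (2*m)) = a⁻¹ * ∑' m, (Nat.choose (2 * m) m : ℝ) / (4 ^ m * (4 * m + 1)) := by
    rw [tsum_congr h2, tsum_mul_left]
  rw [h3]
  have he : Real.exp (-a * ((0:ℝ) ^ 2 + 0 ^ 2) / 2) = 1 := by norm_num
  rw [he]
  have hsa : Real.sqrt a ≠ 0 := ne_of_gt (Real.sqrt_pos.mpr ha)
  have hsp : Real.sqrt π ≠ 0 := ne_of_gt (Real.sqrt_pos.mpr Real.pi_pos)
  have hmain : Real.sqrt (a/π) * 1 * a⁻¹ = 1 / Real.sqrt (π * a) := by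
    rw [Real.sqrt_div ha.le, Real.sqrt_mul Real.pi_pos.le]
    rw [mul_one]
    field_simp
    nlinarith [Real.mul_self_sqrt ha.le, Real.sqrt_nonneg a, Real.sqrt_nonneg π]
  calc Real.sqrt (a/π) * 1 * (a⁻¹ * ∑' m, (Nat.choose (2 * m) m : ℝ) / (4 ^ m * (4 * m + 1)))
      = (Real.sqrt (a/π) * 1 * a⁻¹) * ∑' m, (Nat.choose (2 * m) m : ℝ) / (4 ^ m * (4 * m + 1)) := by
        ring
    _ = (1 / Real.sqrt (π * a)) * ∑' m, (Nat.choose (2 * m) m : ℝ) / (4 ^ m * (4 * m + 1)) := by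
        rw [hmain]

end Aux
end

section
/- There exists a constant C > 0 such that for all x, y ∈ ℝ, |G⁰_1(x,y)| ≤ C · exp(−(x² + y²)/2). In particular, combined with the scaling identity G⁰_a(x,y) = a^{−1/2} G⁰_1(√a·x, √a·y), for every fixed (x,y) ≠ (0,0) the local Green kernel G⁰_a(x,y) tends to 0 exponentially fast as a → ∞. -/
open Real

noncomputable section
open MeasureTheory
namespace LGK

/-- The Fourier-type integrand. -/
def Fc (j : ℕ) (x t : ℝ) : ℂ :=
  (Complex.I * t) ^ j * Complex.exp (-(t : ℂ) ^ 2 / 4 + (Complex.I * t) * x)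

lemma norm_Fc (j : ℕ) (x t : ℝ) : ‖Fc j x t‖ = |t| ^ j * Real.exp (-t ^ 2 / 4) := by
  unfold Fc
  rw [norm_mul, norm_pow, norm_mul, Complex.norm_I, one_mul, Complex.norm_real,
    Real.norm_eq_abs, Complex.norm_exp]
  congr 2
  simp [Complex.add_re, Complex.div_re, Complex.mul_re, Complex.mul_im, ← Complex.ofReal_pow]

lemma cont_Fc (j : ℕ) (x : ℝ) : Continuous (fun t : ℝ => Fc j x t) := by
  unfold Fc
  fun_prop

lemma integrable_bound (k : ℕ) :
    Integrable (fun t : ℝ => |t| ^ k * Real.exp (-t ^ 2 / 4)) := by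
  have h := (integrable_rpow_mul_exp_neg_mul_sq (by norm_num : (0:ℝ) < 4⁻¹)
    (by exact_mod_cast neg_one_lt_zero.trans_le k.cast_nonneg : (-1:ℝ) < k)).abs
  refine h.congr (Filter.Eventually.of_forall fun t => ?_)
  show |t ^ (k:ℝ) * rexp (-4⁻¹ * t ^ 2)| = _
  rw [abs_mul, Real.abs_exp, Real.rpow_natCast, abs_pow]
  ring_nf

lemma integrable_Fc (j : ℕ) (x : ℝ) : Integrable (Fc j x) := by
  refine (integrable_bound j).mono' (cont_Fc j x).aestronglyMeasurable
    (Filter.Eventually.of_forall fun t => ?_)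
  rw [norm_Fc]

lemma moment (k : ℕ) :
    ∫ t : ℝ, |t| ^ k * Real.exp (-t ^ 2 / 4)
      = 2 * (2 ^ k * Real.Gamma (((k : ℝ) + 1) / 2)) := by
  have e1 : (fun t : ℝ => |t| ^ k * Real.exp (-t ^ 2 / 4))
      = fun t : ℝ => (fun u : ℝ => u ^ k * Real.exp (-u ^ 2 / 4)) |t| := by
    funext t; simp [sq_abs]
  rw [e1, integral_comp_abs (f := fun u : ℝ => u ^ k * Real.exp (-u ^ 2 / 4))]
  congr 1
  have h := integral_rpow_mul_exp_neg_mul_rpow (p := 2) (q := (k:ℝ)) (b := 1/4)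
    two_pos (by exact_mod_cast neg_one_lt_zero.trans_le k.cast_nonneg) (by norm_num)
  have e2 : ∀ x : ℝ, x ^ (k:ℝ) * Real.exp (-(1/4) * x ^ (2:ℝ))
      = x ^ k * Real.exp (-x ^ 2 / 4) := by
    intro x
    rw [Real.rpow_natCast, show (2:ℝ) = ((2:ℕ):ℝ) by norm_num, Real.rpow_natCast]
    ring_nf
  rw [show (∫ x in Set.Ioi (0:ℝ), x ^ k * Real.exp (-x ^ 2 / 4))
      = ∫ x in Set.Ioi (0:ℝ), x ^ (k:ℝ) * Real.exp (-(1/4) * x ^ (2:ℝ)) from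
    integral_congr_ae (Filter.Eventually.of_forall fun x => (e2 x).symm), h]
  have h2 : ((1:ℝ)/4) = (2:ℝ) ^ (-2 : ℝ) := by
    rw [show (-2:ℝ) = -((2:ℕ):ℝ) by norm_num, Real.rpow_neg (by norm_num),
      Real.rpow_natCast]
    norm_num
  have e3 : ((1:ℝ)/4) ^ (-((k:ℝ) + 1) / 2) = 2 ^ ((k:ℝ) + 1) := by
    rw [h2, ← Real.rpow_mul (by norm_num : (0:ℝ) ≤ 2)]
    congr 1
    ring
  rw [e3, show ((k:ℝ) + 1) = ((k + 1 : ℕ) : ℝ) by push_cast; ring, Real.rpow_natCast]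
  rw [pow_succ]
  ring

lemma Fc0 (x : ℝ) :
    ∫ t : ℝ, Fc 0 x t = ((2 * Real.sqrt π : ℝ) : ℂ) * Complex.exp (-(x : ℂ) ^ 2) := by
  have h := fourierIntegral_gaussian (b := (1/4 : ℂ)) (by norm_num) (x : ℂ)
  have e1 : (fun t : ℝ => Fc 0 x t)
      = fun t : ℝ => Complex.exp (Complex.I * (x:ℂ) * (t:ℝ)) *
          Complex.exp (-(1/4 : ℂ) * (t:ℝ) ^ 2) := by
    funext t
    rw [Fc, pow_zero, one_mul, ← Complex.exp_add]
    ring_nf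
  rw [e1, h]
  congr 1
  · rw [show ((π:ℂ) / (1/4)) = (((4 * π : ℝ)) : ℂ) by push_cast; ring,
      show ((1/2 : ℂ)) = (((1/2 : ℝ)) : ℂ) by norm_num,
      ← Complex.ofReal_cpow (by positivity)]
    congr 1
    rw [← Real.sqrt_eq_rpow, show (4 * π : ℝ) = 2^2 * π by ring,
      Real.sqrt_mul (by positivity), Real.sqrt_sq (by norm_num : (0:ℝ) ≤ 2)]
  · congr 1
    ring

lemma hasDeriv (j : ℕ) (x : ℝ) :
    HasDerivAt (fun y : ℝ => ∫ t : ℝ, Fc j y t) (∫ t : ℝ, Fc (j+1) x t) x := by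
  have key := hasDerivAt_integral_of_dominated_loc_of_deriv_le
    (F := fun (y : ℝ) (t : ℝ) => Fc j y t) (F' := fun (y : ℝ) (t : ℝ) => Fc (j+1) y t)
    (x₀ := x) (bound := fun t : ℝ => |t| ^ (j+1) * Real.exp (-t ^ 2 / 4)) (Metric.ball_mem_nhds x one_pos)
    (Filter.Eventually.of_forall fun y => (cont_Fc j y).aestronglyMeasurable)
    (integrable_Fc j x)
    (cont_Fc (j+1) x).aestronglyMeasurable
    (Filter.Eventually.of_forall fun t => fun y _ => le_of_eq (norm_Fc (j+1) y t))
    (integrable_bound (j+1))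
    (Filter.Eventually.of_forall fun t => fun y _ => ?_)
  · exact key.2
  · show HasDerivAt (fun y : ℝ => Fc j y t) (Fc (j+1) y t) y
    have h0 : HasDerivAt (fun y : ℝ => -(t:ℂ) ^ 2 / 4 + (Complex.I * t) * (y:ℝ))
        (Complex.I * t) y := by
      simpa using ((Complex.ofRealCLM.hasDerivAt (x := y)).const_mul
        (Complex.I * t)).const_add (-(t:ℂ) ^ 2 / 4)
    have h1 := (h0.cexp).const_mul ((Complex.I * (t:ℂ)) ^ j)
    have e : Fc (j+1) y t = (Complex.I * (t:ℂ)) ^ j *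
        (Complex.exp (-(t:ℂ) ^ 2 / 4 + (Complex.I * t) * (y:ℝ)) * (Complex.I * t)) := by
      rw [Fc, pow_succ]; ring
    rw [e]
    exact h1

lemma iter (j : ℕ) (x : ℝ) :
    iteratedDeriv j (fun s : ℝ => Real.exp (-s ^ 2)) x
      = (2 * Real.sqrt π)⁻¹ * (∫ t : ℝ, Fc j x t).re := by
  induction j generalizing x with
  | zero =>
    rw [iteratedDeriv_zero, Fc0 x]
    rw [show (-(x:ℂ) ^ 2) = ((-x ^ 2 : ℝ) : ℂ) by push_cast; ring,
      ← Complex.ofReal_exp, ← Complex.ofReal_mul, Complex.ofReal_re]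
    rw [← mul_assoc, inv_mul_cancel₀ (by positivity), one_mul]
  | succ j ih =>
    rw [iteratedDeriv_succ]
    have hfun : iteratedDeriv j (fun s : ℝ => Real.exp (-s ^ 2))
        = fun y => (2 * Real.sqrt π)⁻¹ * (∫ t : ℝ, Fc j y t).re := funext fun y => ih y
    rw [hfun]
    have h1 : HasDerivAt (fun y : ℝ => (2 * Real.sqrt π)⁻¹ * (∫ t : ℝ, Fc j y t).re)
        ((2 * Real.sqrt π)⁻¹ * (∫ t : ℝ, Fc (j+1) x t).re) x :=
      (Complex.reCLM.hasFDerivAt.comp_hasDerivAt x (hasDeriv j x)).const_mul _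
    exact h1.deriv

lemma derivBound (j : ℕ) (x : ℝ) :
    |iteratedDeriv j (fun s : ℝ => Real.exp (-s ^ 2)) x|
      ≤ 2 ^ j * Real.Gamma (((j:ℝ) + 1) / 2) / Real.sqrt π := by
  rw [iter]
  have h1 : |(∫ t : ℝ, Fc j x t).re| ≤ ‖∫ t : ℝ, Fc j x t‖ :=
    Complex.abs_re_le_norm _
  have h2 : ‖∫ t : ℝ, Fc j x t‖ ≤ ∫ t : ℝ, ‖Fc j x t‖ :=
    norm_integral_le_integral_norm _
  have h3 : (∫ t : ℝ, ‖Fc j x t‖) = 2 * (2 ^ j * Real.Gamma (((j:ℝ) + 1) / 2)) := by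
    rw [show (fun t : ℝ => ‖Fc j x t‖) = fun t : ℝ => |t| ^ j * Real.exp (-t ^ 2 / 4) from
      funext fun t => norm_Fc j x t]
    exact moment j
  rw [abs_mul, abs_of_nonneg (by positivity : (0:ℝ) ≤ (2 * Real.sqrt π)⁻¹)]
  calc (2 * Real.sqrt π)⁻¹ * |(∫ t : ℝ, Fc j x t).re|
      ≤ (2 * Real.sqrt π)⁻¹ * (2 * (2 ^ j * Real.Gamma (((j:ℝ) + 1) / 2))) := by
        gcongr
        exact h1.trans (h2.trans_eq h3)
    _ = 2 ^ j * Real.Gamma (((j:ℝ) + 1) / 2) / Real.sqrt π := by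
        field_simp

lemma rho_bound : ∀ j : ℕ,
    2 ^ j * Real.Gamma (((j:ℝ) + 1) / 2) ^ 2 * Real.sqrt ((j:ℝ) + 1)
      ≤ π * (Nat.factorial j : ℝ) := by
  intro j
  induction j using Nat.twoStepInduction with
  | zero =>
    simp only [Nat.cast_zero, pow_zero, one_mul, Nat.factorial_zero, Nat.cast_one, mul_one]
    rw [show ((0:ℝ) + 1) / 2 = 1/2 by norm_num, Real.Gamma_one_half_eq, zero_add,
      Real.sqrt_one, Real.sq_sqrt Real.pi_pos.le, mul_one]
  | one =>
    rw [show (((1:ℕ):ℝ) + 1) / 2 = 1 by norm_num, Real.Gamma_one]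
    have hs : Real.sqrt (((1:ℕ):ℝ) + 1) = Real.sqrt 2 := by norm_num
    rw [hs]
    have h2 : Real.sqrt 2 ^ 2 = 2 := Real.sq_sqrt (by norm_num)
    have h0 : (0:ℝ) ≤ Real.sqrt 2 := Real.sqrt_nonneg 2
    have hpi : (3.14:ℝ) ≤ π := by
      have := Real.pi_gt_d6
      linarith
    simp only [Nat.factorial_one, Nat.cast_one, mul_one, one_pow]
    nlinarith [sq_nonneg (Real.sqrt 2 - 1.5)]
  | more j ih _ =>
    set G := Real.Gamma (((j:ℝ) + 1) / 2) with hGdef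
    have hGpos : 0 < G := Real.Gamma_pos_of_pos (by positivity)
    have harg : (((j + 2 : ℕ) : ℝ) + 1) / 2 = ((j:ℝ) + 1) / 2 + 1 := by push_cast; ring
    have hGrec : Real.Gamma ((((j + 2 : ℕ) : ℝ) + 1) / 2) = (((j:ℝ) + 1) / 2) * G := by
      rw [harg, Real.Gamma_add_one (by positivity)]
    have hu : Real.sqrt ((j:ℝ) + 1) ^ 2 = (j:ℝ) + 1 := Real.sq_sqrt (by positivity)
    have hv : Real.sqrt (((j + 2 : ℕ) : ℝ) + 1) = Real.sqrt ((j:ℝ) + 3) := by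
      rw [show (((j + 2 : ℕ) : ℝ)) + 1 = (j:ℝ) + 3 by push_cast; ring]
    have key : ((j:ℝ) + 1) * Real.sqrt ((j:ℝ) + 3) ≤ ((j:ℝ) + 2) * Real.sqrt ((j:ℝ) + 1) := by
      have h1 : ((j:ℝ) + 1) * Real.sqrt ((j:ℝ) + 3)
          = Real.sqrt (((j:ℝ)+1)^2 * ((j:ℝ)+3)) := by
        rw [Real.sqrt_mul (by positivity), Real.sqrt_sq (by positivity)]
      have h2 : ((j:ℝ) + 2) * Real.sqrt ((j:ℝ) + 1)
          = Real.sqrt (((j:ℝ)+2)^2 * ((j:ℝ)+1)) := by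
        rw [Real.sqrt_mul (by positivity), Real.sqrt_sq (by positivity)]
      rw [h1, h2]
      apply Real.sqrt_le_sqrt
      nlinarith [sq_nonneg ((j:ℝ))]
    have hfact : (Nat.factorial (j+2) : ℝ)
        = ((j:ℝ)+2) * (((j:ℝ)+1) * (Nat.factorial j : ℝ)) := by
      rw [Nat.factorial_succ, Nat.factorial_succ]; push_cast; ring
    rw [hGrec, hv, hfact, show (2:ℝ)^(j+2) = 4 * 2^j by rw [pow_succ, pow_succ]; ring]
    have hkey2 := mul_le_mul_of_nonneg_left key
      (show (0:ℝ) ≤ 2 ^ j * G ^ 2 * ((j:ℝ) + 1) by positivity)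
    have hih2 := mul_le_mul_of_nonneg_left ih
      (show (0:ℝ) ≤ ((j:ℝ) + 2) * ((j:ℝ) + 1) by positivity)
    nlinarith [hkey2, hih2]

def tj (j : ℕ) : ℝ :=
  (2 ^ j * Real.Gamma (((j:ℝ) + 1) / 2) / Real.sqrt π) ^ 2
    / ((2 * (j:ℝ) + 1) * 2 ^ j * (Nat.factorial j : ℝ))

lemma tj_nonneg (j : ℕ) : 0 ≤ tj j := by
  rw [tj]
  positivity

lemma tj_le (j : ℕ) : tj j ≤ (((j:ℝ) + 1) * Real.sqrt ((j:ℝ) + 1))⁻¹ := by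
  have hrho := rho_bound j
  have hG : 0 < Real.Gamma (((j:ℝ) + 1) / 2) := Real.Gamma_pos_of_pos (by positivity)
  have hfac : (0:ℝ) < (Nat.factorial j : ℝ) := by exact_mod_cast j.factorial_pos
  have hsq : Real.sqrt π ^ 2 = π := Real.sq_sqrt Real.pi_pos.le
  have htj : tj j = (2 ^ j * Real.Gamma (((j:ℝ) + 1) / 2)) ^ 2
      / (π * ((2 * (j:ℝ) + 1) * 2 ^ j * (Nat.factorial j : ℝ))) := by
    rw [tj, div_pow, hsq, div_div]
  rw [htj, ← one_div, div_le_div_iff₀ (by positivity) (by positivity), one_mul]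
  have h1 := mul_le_mul_of_nonneg_left hrho
    (show (0:ℝ) ≤ 2 ^ j * ((j:ℝ) + 1) by positivity)
  have h2 := mul_le_mul_of_nonneg_left
    (show ((j:ℝ) + 1) ≤ 2 * (j:ℝ) + 1 by linarith [Nat.cast_nonneg (α := ℝ) j])
    (show (0:ℝ) ≤ π * (Nat.factorial j : ℝ) * 2 ^ j by positivity)
  nlinarith [h1, h2]

lemma summable_tj : Summable tj := by
  have hmaj : Summable (fun j : ℕ => (((j:ℝ) + 1) * Real.sqrt ((j:ℝ) + 1))⁻¹) := by
    have h0 : Summable (fun n : ℕ => ((n:ℝ) ^ ((3:ℝ)/2))⁻¹) :=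
      Real.summable_nat_rpow_inv.mpr (by norm_num)
    have h1 := (summable_nat_add_iff 1).mpr h0
    refine h1.congr fun n => ?_
    congr 1
    push_cast
    rw [show (3:ℝ)/2 = 1 + 1/2 by norm_num, Real.rpow_add (by positivity), Real.rpow_one,
      ← Real.sqrt_eq_rpow]
  exact hmaj.of_nonneg_of_le tj_nonneg tj_le

lemma derivBound_a {a : ℝ} (ha : 0 < a) (j : ℕ) (x : ℝ) :
    |iteratedDeriv j (fun s : ℝ => Real.exp (-a * s ^ 2)) x|
      ≤ Real.sqrt a ^ j * (2 ^ j * Real.Gamma (((j:ℝ) + 1) / 2) / Real.sqrt π) := by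
  have hfa : (fun s : ℝ => Real.exp (-a * s ^ 2))
      = fun s : ℝ => (fun u : ℝ => Real.exp (-u ^ 2)) (Real.sqrt a * s) := by
    funext s
    simp only
    congr 1
    rw [mul_pow, Real.sq_sqrt ha.le]
    ring
  have hg : ContDiff ℝ j (fun u : ℝ => Real.exp (-u ^ 2)) :=
    Real.contDiff_exp.comp ((contDiff_id.pow 2).neg)
  rw [hfa, iteratedDeriv_comp_const_mul hg (Real.sqrt a)]
  rw [abs_mul, abs_pow, abs_of_nonneg (Real.sqrt_nonneg a)]
  gcongr
  exact derivBound j _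

set_option maxHeartbeats 1000000 in
lemma kernel_bound {a : ℝ} (ha : 1 ≤ a) (x y : ℝ) :
    |localGreenKernel a x y|
      ≤ ((∑' j, tj j) / Real.sqrt π) * Real.exp (-a * (x ^ 2 + y ^ 2) / 2) := by
  have ha0 : (0:ℝ) < a := lt_of_lt_of_le one_pos ha
  set Bj : ℕ → ℝ := fun j => 2 ^ j * Real.Gamma (((j:ℝ) + 1) / 2) / Real.sqrt π with hBj
  set term : ℕ → ℝ := fun j =>
    iteratedDeriv j (fun s : ℝ => Real.exp (-a * s ^ 2)) x *
        iteratedDeriv j (fun s : ℝ => Real.exp (-a * s ^ 2)) y /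
      ((2 * (j:ℝ) + 1) * a ^ (j + 1) * 2 ^ j * (Nat.factorial j : ℝ)) with hterm
  have hBnn : ∀ j, 0 ≤ Bj j := fun j => by rw [hBj]; positivity
  have hsqra : Real.sqrt a ^ 2 = a := Real.sq_sqrt ha0.le
  have habs : ∀ j, |term j| ≤ tj j * a⁻¹ := by
    intro j
    have hdenom : (0:ℝ) < (2 * (j:ℝ) + 1) * a ^ (j + 1) * 2 ^ j * (Nat.factorial j : ℝ) := by
      have : (0:ℝ) < (Nat.factorial j : ℝ) := by exact_mod_cast j.factorial_pos
      positivity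
    have hb1 := derivBound_a ha0 j x
    have hb2 := derivBound_a ha0 j y
    have hnum : |iteratedDeriv j (fun s : ℝ => Real.exp (-a * s ^ 2)) x *
        iteratedDeriv j (fun s : ℝ => Real.exp (-a * s ^ 2)) y| ≤ a ^ j * Bj j ^ 2 := by
      rw [abs_mul]
      calc |iteratedDeriv j (fun s : ℝ => Real.exp (-a * s ^ 2)) x| *
            |iteratedDeriv j (fun s : ℝ => Real.exp (-a * s ^ 2)) y|
          ≤ (Real.sqrt a ^ j * Bj j) * (Real.sqrt a ^ j * Bj j) :=
            mul_le_mul hb1 hb2 (abs_nonneg _) (by positivity)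
        _ = (Real.sqrt a ^ j * Real.sqrt a ^ j) * Bj j ^ 2 := by ring
        _ = a ^ j * Bj j ^ 2 := by
            rw [← mul_pow, Real.mul_self_sqrt ha0.le]
    have h1 : |term j| ≤ (a ^ j * Bj j ^ 2)
        / ((2 * (j:ℝ) + 1) * a ^ (j + 1) * 2 ^ j * (Nat.factorial j : ℝ)) := by
      rw [hterm]
      simp only
      rw [abs_div, abs_of_pos hdenom]
      gcongr
    have h2 : (a ^ j * Bj j ^ 2)
        / ((2 * (j:ℝ) + 1) * a ^ (j + 1) * 2 ^ j * (Nat.factorial j : ℝ))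
        = tj j * a⁻¹ := by
      have hfac : ((Nat.factorial j : ℝ)) ≠ 0 := by
        exact_mod_cast j.factorial_pos.ne'
      have h2j : ((2:ℝ) * (j:ℝ) + 1) ≠ 0 := by positivity
      have htj : tj j = Bj j ^ 2 / ((2 * (j:ℝ) + 1) * 2 ^ j * (Nat.factorial j : ℝ)) := rfl
      rw [htj, pow_succ]
      field_simp
      ring
    exact h1.trans_eq h2
  -- summability
  have hS : Summable (fun j => tj j * a⁻¹) := summable_tj.mul_right _
  have habs' : Summable (fun j => |term j|) :=
    hS.of_nonneg_of_le (fun j => abs_nonneg _) habs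
  have hterm_sum : Summable term := habs'.of_abs
  have hT : |∑' j, term j| ≤ (∑' j, tj j) * a⁻¹ := by
    calc |∑' j, term j| ≤ ∑' j, |term j| := by
          have := norm_tsum_le_tsum_norm (f := term)
            (by simpa only [Real.norm_eq_abs] using habs' : Summable fun j => ‖term j‖)
          simpa only [Real.norm_eq_abs] using this
      _ ≤ ∑' j, tj j * a⁻¹ := habs'.tsum_le_tsum habs hS
      _ = (∑' j, tj j) * a⁻¹ := tsum_mul_right
  -- assemble
  have hEq : localGreenKernel a x y
      = Real.sqrt (a / π) * Real.exp (-a * (x ^ 2 + y ^ 2) / 2) * ∑' j, term j := rfl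
  rw [hEq, abs_mul, abs_mul, abs_of_nonneg (Real.sqrt_nonneg _),
    abs_of_nonneg (Real.exp_pos _).le]
  have hfac : Real.sqrt (a / π) * a⁻¹ ≤ (Real.sqrt π)⁻¹ := by
    rw [div_eq_mul_inv a π, Real.sqrt_mul ha0.le, Real.sqrt_inv]
    have hsa : Real.sqrt a ≤ a := by
      nth_rewrite 2 [← Real.sqrt_mul_self ha0.le]
      exact Real.sqrt_le_sqrt (by nlinarith)
    calc Real.sqrt a * (Real.sqrt π)⁻¹ * a⁻¹
        = (Real.sqrt a * a⁻¹) * (Real.sqrt π)⁻¹ := by ring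
      _ ≤ 1 * (Real.sqrt π)⁻¹ := by
          gcongr
          rw [← div_eq_mul_inv]
          exact div_le_one_of_le₀ hsa ha0.le
      _ = (Real.sqrt π)⁻¹ := one_mul _
  have hSnn : 0 ≤ ∑' j, tj j := tsum_nonneg tj_nonneg
  calc Real.sqrt (a / π) * Real.exp (-a * (x ^ 2 + y ^ 2) / 2) * |∑' j, term j|
      ≤ Real.sqrt (a / π) * Real.exp (-a * (x ^ 2 + y ^ 2) / 2) * ((∑' j, tj j) * a⁻¹) := by
        gcongr
    _ = (Real.sqrt (a / π) * a⁻¹) * (∑' j, tj j) * Real.exp (-a * (x ^ 2 + y ^ 2) / 2) := by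
        ring
    _ ≤ (Real.sqrt π)⁻¹ * (∑' j, tj j) * Real.exp (-a * (x ^ 2 + y ^ 2) / 2) := by
        gcongr
    _ = ((∑' j, tj j) / Real.sqrt π) * Real.exp (-a * (x ^ 2 + y ^ 2) / 2) := by
        rw [div_eq_mul_inv]
        ring


end LGK
end

open LGK in
/-- Gaussian bound for `G⁰_1` and exponential off-diagonal decay of `G⁰_a` as `a → ∞`:
there is `C > 0` with `|G⁰_1(x,y)| ≤ C e^{−(x²+y²)/2}` for all `x, y`; in particular,
for every fixed `(x,y) ≠ (0,0)`, `G⁰_a(x,y) → 0` exponentially fast as `a → ∞`. -/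
theorem localGreenKernel_gaussian_bound :
    ∃ C > 0, (∀ x y : ℝ, |localGreenKernel 1 x y| ≤ C * Real.exp (-(x ^ 2 + y ^ 2) / 2)) ∧
      ∀ x y : ℝ, (x, y) ≠ (0, 0) →
        ∃ c > 0, ∃ C' > 0, ∀ a : ℝ, 1 ≤ a →
          |localGreenKernel a x y| ≤ C' * Real.exp (-c * a) := by
  have hS : 0 ≤ ∑' j, tj j := tsum_nonneg tj_nonneg
  have hSπ : 0 ≤ (∑' j, tj j) / Real.sqrt π := by positivity
  refine ⟨(∑' j, tj j) / Real.sqrt π + 1, by linarith, fun x y => ?_, fun x y hxy => ?_⟩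
  · have h := kernel_bound le_rfl x y
    rw [show (-1 : ℝ) * (x ^ 2 + y ^ 2) / 2 = -(x ^ 2 + y ^ 2) / 2 by ring] at h
    calc |localGreenKernel 1 x y|
        ≤ ((∑' j, tj j) / Real.sqrt π) * Real.exp (-(x ^ 2 + y ^ 2) / 2) := h
      _ ≤ ((∑' j, tj j) / Real.sqrt π + 1) * Real.exp (-(x ^ 2 + y ^ 2) / 2) := by
          gcongr
          linarith
  · have hr : 0 < (x ^ 2 + y ^ 2) / 2 := by
      have hne : x ≠ 0 ∨ y ≠ 0 := by
        by_contra h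
        push_neg at h
        exact hxy (by simp [h.1, h.2])
      rcases hne with h | h
      · positivity
      · positivity
    refine ⟨(x ^ 2 + y ^ 2) / 2, hr, (∑' j, tj j) / Real.sqrt π + 1, by linarith,
      fun a ha => ?_⟩
    have h := kernel_bound ha x y
    rw [show -a * (x ^ 2 + y ^ 2) / 2 = -((x ^ 2 + y ^ 2) / 2) * a by ring] at h
    calc |localGreenKernel a x y|
        ≤ ((∑' j, tj j) / Real.sqrt π) * Real.exp (-((x ^ 2 + y ^ 2) / 2) * a) := h
      _ ≤ ((∑' j, tj j) / Real.sqrt π + 1) * Real.exp (-((x ^ 2 + y ^ 2) / 2) * a) := by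
          gcongr
          linarith
end
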